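/- Let $K$ be a field, $w \in K$ a primitive $N$-th root of unity ($N \ge 2$), and $i, j \in \mathbb{Z}$. Define $R(k,l) = w^{j-l} - w^{k-1-i}$ for $0 \le l < k$, $R(k,k) = 1$, and define $\lambda(k,l)$ by the recursion $\lambda(0,0)=1$, $\lambda(k,0)=R(k,0)\lambda(k-1,0)$, $\lambda(k,l)=R(k,l)\lambda(k-1,l)+\lambda(k-1,l-1)$ for $0<l<k$, $\lambda(k,k)=1$. Let $m \ge 0$ be the smallest integer with $R(m+1,0) = 0$. Then for every $k > m$ and $0 \le l \le m$, one has $\lambda(k,l) = 0$. -/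

import Mathlib

/-!
The recursion for `λ` is multiplication by `X - w^{k-1-i}` written in the Newton basis
`Q_l = ∏_{b<l} (X - w^{j-b})`, so `∏_{a<k} (X - w^{a-i}) = ∑_{l≤k} λ(k,l) Q_l`.
The condition `R(m+1,0) = 0` says `w^j = w^{m-i}`, so the nodes `w^{j-b}`, `b ≤ m`, are the
nodes `w^{a-i}`, `a ≤ m`, in reverse order: the `(m+1)`-st product is `Q_{m+1}`, and linear
independence of the `Q_l` forces `λ(m+1,l) = 0` for `l ≤ m`. The recursion then carries this
vanishing to every `k > m`.
-/

/-- `R(k,l) = w^{j-l} - w^{k-1-i}` for `l < k`, and `R(k,k) = 1`. -/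
def Rc {K : Type*} [Field K] (w : K) (i j : ℤ) (k l : ℕ) : K :=
  if l < k then w ^ (j - (l : ℤ)) - w ^ ((k : ℤ) - 1 - i) else 1

/-- The recursively defined coefficients `λ(k,l)`. -/
def lam {K : Type*} [Field K] (w : K) (i j : ℤ) : ℕ → ℕ → K
  | 0, 0 => 1
  | 0, _ + 1 => 0
  | k + 1, 0 => Rc w i j (k + 1) 0 * lam w i j k 0
  | k + 1, l + 1 =>
      if l + 1 = k + 1 then 1
      else if l + 1 < k + 1 then
        Rc w i j (k + 1) (l + 1) * lam w i j k (l + 1) + lam w i j k l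
      else 0

open Polynomial Finset

noncomputable def Polynomial.newtonSequence {R : Type*} [CommRing R] [Nontrivial R]
    (y : ℕ → R) : Polynomial.Sequence R where
  elems' l := ∏ b ∈ range l, (X - C (y b))
  degree_eq' l := by
    rw [degree_eq_natDegree (monic_prod_X_sub_C y _).ne_zero,
      natDegree_finsetProd_X_sub_C_eq_card, card_range]

lemma Polynomial.newtonSequence_apply {R : Type*} [CommRing R] [Nontrivial R] (y : ℕ → R)
    (l : ℕ) : newtonSequence y l = ∏ b ∈ range l, (X - C (y b)) := rfl

lemma Polynomial.X_sub_C_mul_sum_smul_newtonSequence {R : Type*} [CommRing R] [Nontrivial R]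
    (y : ℕ → R) (x : R) (c : ℕ → R) (n : ℕ) :
    (X - C x) * ∑ l ∈ range n, c l • newtonSequence y l =
      ∑ l ∈ range n, c l • newtonSequence y (l + 1) +
        ∑ l ∈ range n, ((y l - x) * c l) • newtonSequence y l := by
  simp only [mul_sum, ← sum_add_distrib, newtonSequence_apply, prod_range_succ,
    smul_eq_C_mul, C_mul, C_sub]
  exact sum_congr rfl fun _ _ ↦ by ring

section lam

variable {K : Type*} [Field K] (w : K) (i j : ℤ)

lemma lam_eq_zero_of_lt {k l : ℕ} (h : k < l) : lam w i j k l = 0 := by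
  match k, l, h with
  | 0, _ + 1, _ => rfl
  | k + 1, l + 1, h =>
    simp only [lam, add_left_inj, h.not_gt, if_false, ite_eq_right_iff]
    omega

@[simp]
lemma lam_self (k : ℕ) : lam w i j k k = 1 := by
  cases k <;> simp [lam]

lemma lam_succ_zero (k : ℕ) :
    lam w i j (k + 1) 0 = (w ^ j - w ^ ((k : ℤ) - i)) * lam w i j k 0 := by
  simp [lam, Rc]

lemma lam_succ_succ (k l : ℕ) :
    lam w i j (k + 1) (l + 1) =
      (w ^ (j - (l + 1 : ℕ)) - w ^ ((k : ℤ) - i)) * lam w i j k (l + 1) + lam w i j k l := by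
  rcases lt_trichotomy l k with h | rfl | h
  · simp [lam, Rc, h.ne, h]
  · simp [lam_eq_zero_of_lt w i j (Nat.lt_succ_self l)]
  · rw [lam_eq_zero_of_lt w i j (by omega), lam_eq_zero_of_lt w i j (by omega),
      lam_eq_zero_of_lt w i j h]
    ring

end lam

section expansion

variable {K : Type*} [Field K] (w : K) (i j : ℤ)

theorem prod_X_sub_C_eq_sum_lam_smul (k : ℕ) :
    ∏ a ∈ range k, (X - C (w ^ ((a : ℤ) - i))) =
      ∑ l ∈ range (k + 1),
        lam w i j k l • newtonSequence (fun b : ℕ ↦ w ^ (j - b)) l := by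
  induction k with
  | zero => simp [newtonSequence_apply]
  | succ k ih =>
    have hextend :
        ∑ l ∈ range (k + 1), ((w ^ (j - l) - w ^ ((k : ℤ) - i)) * lam w i j k l) •
          newtonSequence (fun b : ℕ ↦ w ^ (j - b)) l =
        ∑ l ∈ range (k + 2), ((w ^ (j - l) - w ^ ((k : ℤ) - i)) * lam w i j k l) •
          newtonSequence (fun b : ℕ ↦ w ^ (j - b)) l := by
      rw [sum_range_succ _ (k + 1), lam_eq_zero_of_lt w i j (Nat.lt_succ_self k), mul_zero,
        zero_smul, add_zero]
    rw [prod_range_succ, ih, mul_comm, X_sub_C_mul_sum_smul_newtonSequence, hextend,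
      sum_range_succ' _ (k + 1), sum_range_succ' (fun l ↦ lam w i j (k + 1) l • _)]
    simp only [lam_succ_succ, lam_succ_zero, add_smul, sum_add_distrib, Nat.cast_zero, sub_zero]
    abel

end expansion

section vanishing

variable {K : Type*} [Field K] {w : K} {i j : ℤ} {m : ℕ}

lemma newtonSequence_zpow_eq_prod (hw : w ≠ 0) (h : w ^ j = w ^ ((m : ℤ) - i)) :
    newtonSequence (fun b : ℕ ↦ w ^ (j - b)) (m + 1) =
      ∏ a ∈ range (m + 1), (X - C (w ^ ((a : ℤ) - i))) := by
  rw [newtonSequence_apply, ← prod_range_reflect (fun a : ℕ ↦ X - C (w ^ ((a : ℤ) - i)))]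
  refine prod_congr rfl fun b hb ↦ ?_
  have hbm : b ≤ m := Nat.lt_succ_iff.mp (mem_range.mp hb)
  rw [zpow_sub₀ hw, h, ← zpow_sub₀ hw, Nat.add_sub_cancel, Nat.cast_sub hbm]
  ring_nf

lemma lam_succ_eq_zero (hw : w ≠ 0) (h : w ^ j = w ^ ((m : ℤ) - i)) {l : ℕ} (hl : l ≤ m) :
    lam w i j (m + 1) l = 0 := by
  have hsum : ∑ l ∈ range (m + 1), lam w i j (m + 1) l •
      newtonSequence (fun b : ℕ ↦ w ^ (j - b)) l = 0 := by
    have := prod_X_sub_C_eq_sum_lam_smul w i j (m + 1)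
    rwa [← newtonSequence_zpow_eq_prod hw h, sum_range_succ, lam_self, one_smul,
      right_eq_add] at this
  exact linearIndependent_iff'.mp (newtonSequence _).linearIndependent _ _ hsum l
    (mem_range.mpr (Nat.lt_succ_of_le hl))

lemma lam_succ_eq_zero_of_forall {k : ℕ} (h : ∀ l ≤ m, lam w i j k l = 0) {l : ℕ}
    (hl : l ≤ m) :
    lam w i j (k + 1) l = 0 := by
  cases l with
  | zero => rw [lam_succ_zero, h 0 (Nat.zero_le m), mul_zero]
  | succ l => rw [lam_succ_succ, h _ hl, h l (by omega), mul_zero, add_zero]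

end vanishing

theorem stmt15_general {K : Type*} [Field K] (N : ℕ) (hN : 2 ≤ N)
    (w : K) (hw : IsPrimitiveRoot w N) (i j : ℤ)
    (m : ℕ) (hm : Rc w i j (m + 1) 0 = 0) :
    ∀ k l : ℕ, m < k → l ≤ m → lam w i j k l = 0 := by
  have hw0 : w ≠ 0 := hw.ne_zero (by omega)
  have h : w ^ j = w ^ ((m : ℤ) - i) := by simpa [Rc, sub_eq_zero] using hm
  intro k l hk hl
  induction k, hk using Nat.le_induction generalizing l with
  | base => exact lam_succ_eq_zero hw0 h hl
  | succ k _ ih => exact lam_succ_eq_zero_of_forall ih hl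

theorem stmt15 {K : Type*} [Field K] (N : ℕ) (hN : 2 ≤ N)
    (w : K) (hw : IsPrimitiveRoot w N) (i j : ℤ)
    (m : ℕ) (hm : Rc w i j (m + 1) 0 = 0)
    (hmin : ∀ k : ℕ, k < m → Rc w i j (k + 1) 0 ≠ 0) :
    ∀ k l : ℕ, m < k → l ≤ m → lam w i j k l = 0 :=
  stmt15_general N hN w hw i j m hm
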